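/- arXiv:1907.03845 — 7 statements merged into one kernel-verified Lean document; each statement's English description precedes it below -/
import Mathlib

section
/- If f is a {g,h}-derivation on an algebra A (i.e., f, g, h are linear maps with f(ab) = g(a)b + a h(b) = h(a)b + a g(b) for all a, b in A), then for every non-negative integer n and all a, b in A, the Leibniz-type rule holds: f^n(ab) = \sum_{k=0}^{n} \binom{n}{k} g^{n-k}(a) h^{k}(b) = \sum_{k=0}^{n} \binom{n}{k} h^{n-k}(a) g^{k}(b), where f^0 = g^0 = h^0 is the identity map. -/
/-!
Writing `μ : A ⊗ A → A` for multiplication, the identity `f (a * b) = g a * b + a * h b` says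
`f ∘ μ = μ ∘ (g ⊗ 1 + 1 ⊗ h)`, hence `f ^ n ∘ μ = μ ∘ (g ⊗ 1 + 1 ⊗ h) ^ n`. Since `g ⊗ 1` and
`1 ⊗ h` commute, the binomial theorem expands the right-hand side as
`∑ k, (n choose k) • (g ^ (n - k) ⊗ h ^ k)`. The second formula is the first with `g` and `h`
exchanged.
-/

open TensorProduct

namespace LinearMap

variable {R M N : Type*} [CommSemiring R] [AddCommMonoid M] [AddCommMonoid N]
  [Module R M] [Module R N]

theorem commute_lTensor_rTensor (g : Module.End R M) (h : Module.End R N) :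
    Commute (h.lTensor M) (g.rTensor N) := by
  change h.lTensor M ∘ₗ g.rTensor N = g.rTensor N ∘ₗ h.lTensor M
  rw [lTensor_comp_rTensor, rTensor_comp_lTensor]

theorem rTensor_add_lTensor_pow (g : Module.End R M) (h : Module.End R N) (n : ℕ) :
    (g.rTensor N + h.lTensor M) ^ n =
      ∑ k ∈ Finset.range (n + 1), n.choose k • map (g ^ (n - k)) (h ^ k) := by
  rw [add_comm, (commute_lTensor_rTensor g h).add_pow]
  refine Finset.sum_congr rfl fun k _ => ?_
  rw [lTensor_pow, rTensor_pow, ← nsmul_eq_mul', Module.End.mul_eq_comp, lTensor_comp_rTensor]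

end LinearMap

namespace Module.End

variable {R A : Type*} [CommSemiring R] [NonUnitalNonAssocSemiring A] [Module R A]
  [SMulCommClass R A A] [IsScalarTower R A A] {f g h : Module.End R A}

theorem comp_mul'_of_map_mul (hf : ∀ a b : A, f (a * b) = g a * b + a * h b) :
    f ∘ₗ LinearMap.mul' R A = LinearMap.mul' R A ∘ₗ (g.rTensor A + h.lTensor A) :=
  TensorProduct.ext' fun a b => by simp [hf]

theorem pow_comp_mul'_of_map_mul (hf : ∀ a b : A, f (a * b) = g a * b + a * h b) (n : ℕ) :
    (f ^ n) ∘ₗ LinearMap.mul' R A = LinearMap.mul' R A ∘ₗ (g.rTensor A + h.lTensor A) ^ n := by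
  induction n with
  | zero => rfl
  | succ n ih =>
    rw [pow_succ', mul_eq_comp, LinearMap.comp_assoc, ih, ← LinearMap.comp_assoc,
      comp_mul'_of_map_mul hf, LinearMap.comp_assoc, ← mul_eq_comp, ← pow_succ']

theorem pow_apply_mul_of_map_mul (hf : ∀ a b : A, f (a * b) = g a * b + a * h b) (n : ℕ)
    (a b : A) :
    (f ^ n) (a * b) =
      ∑ k ∈ Finset.range (n + 1), n.choose k • ((g ^ (n - k)) a * (h ^ k) b) := by
  have := congr($(pow_comp_mul'_of_map_mul hf n) (a ⊗ₜ b))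
  simpa [LinearMap.rTensor_add_lTensor_pow] using this

end Module.End

theorem leibniz_rule_pow_ghDerivation_general
    {K A : Type*} [Field K] [Ring A] [Algebra K A]
    (f g h : Module.End K A)
    (hgh : ∀ a b : A, f (a * b) = g a * b + a * h b ∧ f (a * b) = h a * b + a * g b) :
    ∀ (n : ℕ) (a b : A),
      (f ^ n) (a * b) =
        ∑ k ∈ Finset.range (n + 1), (n.choose k) • ((g ^ (n - k)) a * (h ^ k) b) ∧
      (f ^ n) (a * b) =
        ∑ k ∈ Finset.range (n + 1), (n.choose k) • ((h ^ (n - k)) a * (g ^ k) b) :=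
  fun n a b =>
    ⟨Module.End.pow_apply_mul_of_map_mul (fun a b => (hgh a b).1) n a b,
      Module.End.pow_apply_mul_of_map_mul (fun a b => (hgh a b).2) n a b⟩

/-- Leibniz rule for powers of a `{g,h}`-derivation. -/
theorem leibniz_rule_pow_ghDerivation
    {K A : Type*} [Field K] [CharZero K] [Ring A] [Algebra K A]
    (f g h : Module.End K A)
    (hgh : ∀ a b : A, f (a * b) = g a * b + a * h b ∧ f (a * b) = h a * b + a * g b) :
    ∀ (n : ℕ) (a b : A),
      (f ^ n) (a * b) =
        ∑ k ∈ Finset.range (n + 1), (n.choose k) • ((g ^ (n - k)) a * (h ^ k) b) ∧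
      (f ^ n) (a * b) =
        ∑ k ∈ Finset.range (n + 1), (n.choose k) • ((h ^ (n - k)) a * (g ^ k) b) :=
  leibniz_rule_pow_ghDerivation_general f g h hgh
end

section
/- If f is a {g,h}-derivation on an algebra A, then the sequences f_n = f^n/n!, g_n = g^n/n!, h_n = h^n/n! (with f_0 = g_0 = h_0 = I) form a higher {g_n,h_n}-derivation; that is, f_n(ab) = \sum_{k=0}^{n} g_{n-k}(a) h_k(b) = \sum_{k=0}^{n} h_{n-k}(a) g_k(b) for all a, b \in A and all non-negative integers n. -/
/-!
Iterating the twisted Leibniz rule `f (a * b) = g a * b + a * h b` gives the binomial expansion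
`fⁿ (a * b) = ∑ C(n, k) • gⁿ⁻ᵏ a * hᵏ b`, exactly as for an ordinary derivation; dividing by `n!`
turns `C(n, k) / n!` into `1 / ((n - k)! k!)`. The second identity is the first one for the
rule with `g` and `h` exchanged.
-/

open Finset

theorem Module.End.pow_apply_mul_eq_sum_choose {R A : Type*} [Semiring R]
    [NonUnitalNonAssocSemiring A] [Module R A] (f g h : Module.End R A)
    (hf : ∀ a b, f (a * b) = g a * b + a * h b) (n : ℕ) (a b : A) :
    (f ^ n) (a * b) = ∑ k ∈ range (n + 1), n.choose k • ((g ^ (n - k)) a * (h ^ k) b) := by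
  induction n with
  | zero => simp
  | succ n ih =>
    rw [sum_choose_succ_nsmul (fun i j => (g ^ j) a * (h ^ i) b), pow_succ',
      Module.End.mul_apply, ih, map_sum, ← sum_add_distrib]
    refine sum_congr rfl fun k hk => ?_
    have hkn : n + 1 - k = n - k + 1 := by have := mem_range.mp hk; omega
    simp only [map_nsmul, hf, hkn, pow_succ', Module.End.mul_apply, nsmul_add]

theorem inv_factorial_mul_choose {K : Type*} [Field K] [CharZero K] {n k : ℕ}
    (hk : k ≤ n) :
    (n.factorial : K)⁻¹ * n.choose k = ((n - k).factorial : K)⁻¹ * (k.factorial : K)⁻¹ := by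
  rw [Nat.cast_choose K hk, div_eq_mul_inv,
    inv_mul_cancel_left₀ (Nat.cast_ne_zero.mpr n.factorial_ne_zero), mul_inv, mul_comm]

theorem Module.End.inv_factorial_smul_pow_apply_mul {K A : Type*} [Field K] [CharZero K]
    [NonUnitalNonAssocSemiring A] [Module K A] [IsScalarTower K A A] [SMulCommClass K A A]
    (f g h : Module.End K A) (hf : ∀ a b, f (a * b) = g a * b + a * h b) (n : ℕ) (a b : A) :
    ((n.factorial : K)⁻¹ • f ^ n) (a * b) =
      ∑ k ∈ range (n + 1),
        (((n - k).factorial : K)⁻¹ • g ^ (n - k)) a * ((k.factorial : K)⁻¹ • h ^ k) b := by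
  rw [LinearMap.smul_apply, pow_apply_mul_eq_sum_choose f g h hf, smul_sum]
  refine sum_congr rfl fun k hk => ?_
  rw [LinearMap.smul_apply, LinearMap.smul_apply, smul_mul_smul_comm, ← Nat.cast_smul_eq_nsmul K,
    smul_smul, inv_factorial_mul_choose (Nat.lt_succ_iff.mp (mem_range.mp hk))]

/-- If `f` is a `{g,h}`-derivation then `fₙ = fⁿ/n!`, `gₙ = gⁿ/n!`, `hₙ = hⁿ/n!`
form a higher `{gₙ,hₙ}`-derivation. -/
theorem ordinary_higher_gh_derivation
    {K A : Type*} [Field K] [CharZero K] [Ring A] [Algebra K A]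
    (f g h : Module.End K A)
    (hgh : ∀ a b : A, f (a * b) = g a * b + a * h b ∧ f (a * b) = h a * b + a * g b) :
    ∀ (n : ℕ) (a b : A),
      ((n.factorial : K)⁻¹ • f ^ n) (a * b) =
        ∑ k ∈ Finset.range (n + 1),
          (((n - k).factorial : K)⁻¹ • g ^ (n - k)) a * ((k.factorial : K)⁻¹ • h ^ k) b ∧
      ((n.factorial : K)⁻¹ • f ^ n) (a * b) =
        ∑ k ∈ Finset.range (n + 1),
          (((n - k).factorial : K)⁻¹ • h ^ (n - k)) a * ((k.factorial : K)⁻¹ • g ^ k) b :=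
  fun n a b =>
    ⟨Module.End.inv_factorial_smul_pow_apply_mul f g h (fun a b => (hgh a b).1) n a b,
      Module.End.inv_factorial_smul_pow_apply_mul f h g (fun a b => (hgh a b).2) n a b⟩
end

section
/- Let {f_n} be a higher {g_n,h_n}-derivation on an algebra A over a field of characteristic zero with f_0 = g_0 = h_0 = I. Then there exists a sequence {F_n} of linear maps, where each F_n is a {G_n,H_n}-derivation for suitable linear maps G_n, H_n, such that for every non-negative integer n: (n+1) f_{n+1} = \sum_{k=0}^{n} F_{k+1} \circ f_{n-k}, (n+1) g_{n+1} = \sum_{k=0}^{n} G_{k+1} \circ g_{n-k}, and (n+1) h_{n+1} = \sum_{k=0}^{n} H_{k+1} \circ h_{n-k}. -/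
/-!
With `f(t) = ∑ fₙ tⁿ`, the recursion says that `Fₖ₊₁` is the `k`-th coefficient of the logarithmic
derivative `f'(t) f(t)⁻¹`; since `f₀ = 1` these coefficients are defined by recursion, without
division. Differentiating `f(t)(ab) = g(t)(a) h(t)(b)` gives `f'(t)(ab) = g'(t)(a) h(t)(b) +
g(t)(a) h'(t)(b)`. Expanding both sides of this identity in degree `n` through the recursion, the
terms involving `Fₖ₊₁` with `k < n` match by strong induction, which leaves
`Fₙ₊₁(ab) = Gₙ₊₁(a) b + a Hₙ₊₁(b)`.
-/

open Finset

section Antidiagonal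

variable {M : Type*}

lemma sum_antidiagonal_sum_antidiagonal_fst [AddCommMonoid M] (n : ℕ) (x : ℕ → ℕ → ℕ → M) :
    ∑ p ∈ antidiagonal n, ∑ q ∈ antidiagonal p.1, x q.1 q.2 p.2 =
      ∑ p ∈ antidiagonal n, ∑ q ∈ antidiagonal p.2, x p.1 q.1 q.2 := by
  simp only [sum_sigma']
  apply sum_nbij' (fun ⟨⟨_i, j⟩, ⟨k, l⟩⟩ ↦ ⟨(k, l + j), (l, j)⟩)
    (fun ⟨⟨i, _j⟩, ⟨k, l⟩⟩ ↦ ⟨(i + k, l), (i, k)⟩) <;> aesop (add simp [add_assoc])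

lemma sum_antidiagonal_sum_antidiagonal_snd [AddCommMonoid M] (n : ℕ) (x : ℕ → ℕ → ℕ → M) :
    ∑ p ∈ antidiagonal n, ∑ q ∈ antidiagonal p.2, x p.1 q.1 q.2 =
      ∑ p ∈ antidiagonal n, ∑ q ∈ antidiagonal p.2, x q.1 p.1 q.2 := by
  calc _ = ∑ p ∈ antidiagonal n, ∑ q ∈ antidiagonal p.1, x p.2 q.1 q.2 :=
        (Nat.sum_antidiagonal_swap (f := fun p => ∑ q ∈ antidiagonal p.2, x p.1 q.1 q.2)).symm
    _ = ∑ p ∈ antidiagonal n, ∑ q ∈ antidiagonal p.2, x q.2 p.1 q.1 :=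
        sum_antidiagonal_sum_antidiagonal_fst n fun k l j => x j k l
    _ = _ := sum_congr rfl fun p _ => Nat.sum_antidiagonal_swap (f := fun q => x q.1 p.1 q.2)

/-- The coefficient identity behind the product rule `(uv)' = u'v + uv'`. -/
lemma nsmul_sum_antidiagonal_succ [AddCommMonoid M] (n : ℕ) (c : ℕ → ℕ → M) :
    (n + 1) • ∑ p ∈ antidiagonal (n + 1), c p.1 p.2 =
      ∑ p ∈ antidiagonal n, ((p.1 + 1) • c (p.1 + 1) p.2 + (p.2 + 1) • c p.1 (p.2 + 1)) := by
  calc (n + 1) • ∑ p ∈ antidiagonal (n + 1), c p.1 p.2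
      = ∑ p ∈ antidiagonal (n + 1), (p.1 • c p.1 p.2 + p.2 • c p.1 p.2) := by
        rw [smul_sum]
        refine sum_congr rfl fun p hp => ?_
        rw [← add_smul, mem_antidiagonal.mp hp]
    _ = _ := by
        rw [sum_add_distrib, Nat.sum_antidiagonal_succ, Nat.sum_antidiagonal_succ']
        simp [sum_add_distrib]

lemma eq_of_sum_antidiagonal_eq [AddCancelCommMonoid M] {n : ℕ} {u v : ℕ × ℕ → M}
    (hsum : ∑ p ∈ antidiagonal n, u p = ∑ p ∈ antidiagonal n, v p)
    (hlt : ∀ p ∈ antidiagonal n, p.1 < n → u p = v p) : u (n, 0) = v (n, 0) := by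
  have hmem : (n, 0) ∈ antidiagonal n := by simp
  have hrest : ∑ p ∈ (antidiagonal n).erase (n, 0), u p =
      ∑ p ∈ (antidiagonal n).erase (n, 0), v p := by
    refine sum_congr rfl fun p hp => hlt p (mem_of_mem_erase hp) ?_
    obtain ⟨hne, hp⟩ := mem_erase.mp hp
    rw [HasAntidiagonal.mem_antidiagonal] at hp
    contrapose! hne
    ext <;> simp <;> omega
  rw [← add_sum_erase _ _ hmem, ← add_sum_erase _ _ hmem, hrest] at hsum
  exact add_right_cancel hsum

end Antidiagonal

/-- The coefficients of the logarithmic derivative `f'(t) f(t)⁻¹` of `f(t) = ∑ fₙ tⁿ`, provided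
`f 0 = 1`. -/
noncomputable def logDerivCoeff {R : Type*} [Ring R] (f : ℕ → R) : ℕ → R
  | n => (n + 1) • f (n + 1) - ∑ k : Fin n, logDerivCoeff f k * f (n - k)

lemma sum_range_logDerivCoeff_mul {R : Type*} [Ring R] {f : ℕ → R} (hf0 : f 0 = 1) (n : ℕ) :
    ∑ k ∈ range (n + 1), logDerivCoeff f k * f (n - k) = (n + 1) • f (n + 1) := by
  rw [sum_range_succ, Nat.sub_self, hf0, mul_one, logDerivCoeff,
    ← Fin.sum_univ_eq_sum_range (fun k => logDerivCoeff f k * f (n - k))]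
  abel

section Leibniz

variable {R A : Type*} [Semiring R] [Ring A] [Module R A]

lemma sum_antidiagonal_logDerivCoeff_apply {f : ℕ → Module.End R A} (hf0 : f 0 = 1) (n : ℕ)
    (x : A) : ∑ p ∈ antidiagonal n, logDerivCoeff f p.1 (f p.2 x) = (n + 1) • f (n + 1) x := by
  rw [Nat.sum_antidiagonal_eq_sum_range_succ (fun i j => logDerivCoeff f i (f j x))]
  simpa only [LinearMap.sum_apply, Module.End.mul_apply, LinearMap.smul_apply]
    using congrArg (· x) (sum_range_logDerivCoeff_mul hf0 n)

lemma eq_one_of_apply_mul_eq {f g h : ℕ → Module.End R A} (hg0 : g 0 = 1) (hh0 : h 0 = 1)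
    (hfgh : ∀ n a b, f n (a * b) = ∑ p ∈ antidiagonal n, g p.1 a * h p.2 b) : f 0 = 1 := by
  ext a
  simpa [hg0, hh0] using hfgh 0 a 1

theorem logDerivCoeff_apply_mul {f g h : ℕ → Module.End R A} (hg0 : g 0 = 1) (hh0 : h 0 = 1)
    (hfgh : ∀ n a b, f n (a * b) = ∑ p ∈ antidiagonal n, g p.1 a * h p.2 b) (n : ℕ) (a b : A) :
    logDerivCoeff f n (a * b) = logDerivCoeff g n a * b + a * logDerivCoeff h n b := by
  induction n using Nat.strong_induction_on generalizing a b with | _ n ih =>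
  have hf0 := eq_one_of_apply_mul_eq hg0 hh0 hfgh
  have hsum : ∑ p ∈ antidiagonal n, ∑ q ∈ antidiagonal p.2,
        logDerivCoeff f p.1 (g q.1 a * h q.2 b) =
      ∑ p ∈ antidiagonal n, ∑ q ∈ antidiagonal p.2,
        (logDerivCoeff g p.1 (g q.1 a) * h q.2 b + g q.1 a * logDerivCoeff h p.1 (h q.2 b)) := by
    calc _ = (n + 1) • f (n + 1) (a * b) := by
          simp only [← map_sum, ← hfgh, sum_antidiagonal_logDerivCoeff_apply hf0]
      _ = ∑ p ∈ antidiagonal n, ((p.1 + 1) • g (p.1 + 1) a * h p.2 b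
            + g p.1 a * (p.2 + 1) • h (p.2 + 1) b) := by
          rw [hfgh, nsmul_sum_antidiagonal_succ n fun i j => g i a * h j b]
          simp only [smul_mul_assoc, mul_smul_comm]
      _ = _ := by
          simp only [← sum_antidiagonal_logDerivCoeff_apply hg0,
            ← sum_antidiagonal_logDerivCoeff_apply hh0, sum_mul, mul_sum, sum_add_distrib]
          rw [sum_antidiagonal_sum_antidiagonal_fst n fun k l j =>
              logDerivCoeff g k (g l a) * h j b,
            sum_antidiagonal_sum_antidiagonal_snd n fun i k l =>
              g i a * logDerivCoeff h k (h l b)]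
  have hlast := eq_of_sum_antidiagonal_eq hsum fun p _ hp =>
    sum_congr rfl fun q _ => ih p.1 hp _ _
  simpa [hg0, hh0] using hlast

end Leibniz

theorem higher_gh_derivation_recursion_general
    {K A : Type*} [Field K] [Ring A] [Algebra K A]
    (f g h : ℕ → Module.End K A)
    (hg0 : g 0 = 1) (hh0 : h 0 = 1)
    (hhd : ∀ (n : ℕ) (a b : A),
      f n (a * b) = ∑ k ∈ Finset.range (n + 1), g (n - k) a * h k b ∧
      f n (a * b) = ∑ k ∈ Finset.range (n + 1), h (n - k) a * g k b) :
    ∃ F G H : ℕ → Module.End K A,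
      (∀ n, 1 ≤ n → ∀ a b : A,
        F n (a * b) = G n a * b + a * H n b ∧ F n (a * b) = H n a * b + a * G n b) ∧
      (∀ n : ℕ,
        ((n : K) + 1) • f (n + 1) = ∑ k ∈ Finset.range (n + 1), F (k + 1) * f (n - k) ∧
        ((n : K) + 1) • g (n + 1) = ∑ k ∈ Finset.range (n + 1), G (k + 1) * g (n - k) ∧
        ((n : K) + 1) • h (n + 1) = ∑ k ∈ Finset.range (n + 1), H (k + 1) * h (n - k)) := by
  have hfgh : ∀ n a b, f n (a * b) = ∑ p ∈ antidiagonal n, g p.1 a * h p.2 b := fun n a b => by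
    rw [(hhd n a b).1, ← Nat.sum_antidiagonal_swap]
    exact (Nat.sum_antidiagonal_eq_sum_range_succ (fun i j => g j a * h i b) n).symm
  have hfhg : ∀ n a b, f n (a * b) = ∑ p ∈ antidiagonal n, h p.1 a * g p.2 b := fun n a b => by
    rw [(hhd n a b).2, ← Nat.sum_antidiagonal_swap]
    exact (Nat.sum_antidiagonal_eq_sum_range_succ (fun i j => h j a * g i b) n).symm
  have hf0 := eq_one_of_apply_mul_eq hg0 hh0 hfgh
  have hrec (φ : ℕ → Module.End K A) (hφ0 : φ 0 = 1) (n : ℕ) :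
      ((n : K) + 1) • φ (n + 1) = ∑ k ∈ range (n + 1), logDerivCoeff φ (k + 1 - 1) * φ (n - k) := by
    simp only [Nat.add_sub_cancel]
    rw [sum_range_logDerivCoeff_mul hφ0, ← Nat.cast_succ, Nat.cast_smul_eq_nsmul]
  refine ⟨fun n => logDerivCoeff f (n - 1), fun n => logDerivCoeff g (n - 1),
    fun n => logDerivCoeff h (n - 1), fun n _ a b => ⟨logDerivCoeff_apply_mul hg0 hh0 hfgh _ a b,
      logDerivCoeff_apply_mul hh0 hg0 hfhg _ a b⟩, fun n => ⟨hrec f hf0 n, hrec g hg0 n, hrec h hh0 n⟩⟩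

/-- Lemma 2.2: every higher `{gₙ,hₙ}`-derivation with `f₀ = g₀ = h₀ = I` arises from a
sequence of `{Gₙ,Hₙ}`-derivations via the recursion `(n+1) fₙ₊₁ = ∑ₖ Fₖ₊₁ ∘ fₙ₋ₖ`. -/
theorem higher_gh_derivation_recursion
    {K A : Type*} [Field K] [CharZero K] [Ring A] [Algebra K A]
    (f g h : ℕ → Module.End K A)
    (hf0 : f 0 = 1) (hg0 : g 0 = 1) (hh0 : h 0 = 1)
    (hhd : ∀ (n : ℕ) (a b : A),
      f n (a * b) = ∑ k ∈ Finset.range (n + 1), g (n - k) a * h k b ∧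
      f n (a * b) = ∑ k ∈ Finset.range (n + 1), h (n - k) a * g k b) :
    ∃ F G H : ℕ → Module.End K A,
      (∀ n, 1 ≤ n → ∀ a b : A,
        F n (a * b) = G n a * b + a * H n b ∧ F n (a * b) = H n a * b + a * G n b) ∧
      (∀ n : ℕ,
        ((n : K) + 1) • f (n + 1) = ∑ k ∈ Finset.range (n + 1), F (k + 1) * f (n - k) ∧
        ((n : K) + 1) • g (n + 1) = ∑ k ∈ Finset.range (n + 1), G (k + 1) * g (n - k) ∧
        ((n : K) + 1) • h (n + 1) = ∑ k ∈ Finset.range (n + 1), H (k + 1) * h (n - k)) :=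
  higher_gh_derivation_recursion_general f g h hg0 hh0 hhd
end

section
/- Let {F_n}_{n \geq 1} be a sequence of linear maps on an algebra A over a field of characteristic zero, where each F_n is a {G_n,H_n}-derivation. Define sequences f_n, g_n, h_n by f_0 = g_0 = h_0 = I and the recursions (n+1) f_{n+1} = \sum_{k=0}^{n} F_{k+1} \circ f_{n-k}, (n+1) g_{n+1} = \sum_{k=0}^{n} G_{k+1} \circ g_{n-k}, (n+1) h_{n+1} = \sum_{k=0}^{n} H_{k+1} \circ h_{n-k}. Then {f_n} is a higher {g_n,h_n}-derivation, i.e., f_n(ab) = \sum_{k=0}^{n} g_k(a) h_{n-k}(b) = \sum_{k=0}^{n} h_k(a) g_{n-k}(b) for all a, b \in A and all n. -/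
/-!
Induction on `n`. Apply the recursion to `f (n+1) (a*b)`, expand each `f m (a*b)` by the
induction hypothesis and each `F (k+1)` by the `{G,H}`-rule. After regrouping the triple sums,
the recursions for `g` and `h` collapse the `G`-terms to `∑ (i+1) g (i+1) a * h j b` and the
`H`-terms to `∑ (j+1) g i a * h (j+1) b` over `i + j = n`; since `i + j = n + 1` on the next
antidiagonal, their sum is `(n+1) ∑_{i+j=n+1} g i a * h j b`, and `n + 1` is invertible in
characteristic zero. The second identity is the first with `G` and `H` interchanged.
-/

open Finset Finset.Nat

theorem sum_antidiagonal_antidiagonal_assoc {M : Type*} [AddCommMonoid M] (n : ℕ)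
    (t : ℕ → ℕ → ℕ → M) :
    ∑ p ∈ antidiagonal n, ∑ q ∈ antidiagonal p.2, t p.1 q.1 q.2 =
      ∑ p ∈ antidiagonal n, ∑ q ∈ antidiagonal p.1, t q.1 q.2 p.2 := by
  simp only [sum_sigma']
  refine sum_nbij' (fun x ↦ ⟨(x.1.1 + x.2.1, x.2.2), (x.1.1, x.2.1)⟩)
    (fun x ↦ ⟨(x.2.1, x.2.2 + x.1.2), (x.2.2, x.1.2)⟩) ?_ ?_ ?_ ?_ ?_ <;>
    aesop (add simp [add_assoc])

theorem sum_antidiagonal_antidiagonal_left_comm {M : Type*} [AddCommMonoid M] (n : ℕ)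
    (t : ℕ → ℕ → ℕ → M) :
    ∑ p ∈ antidiagonal n, ∑ q ∈ antidiagonal p.2, t p.1 q.1 q.2 =
      ∑ p ∈ antidiagonal n, ∑ q ∈ antidiagonal p.2, t q.1 p.1 q.2 := by
  simp only [sum_sigma']
  refine sum_nbij' (fun x ↦ ⟨(x.2.1, x.1.1 + x.2.2), (x.1.1, x.2.2)⟩)
    (fun x ↦ ⟨(x.2.1, x.1.1 + x.2.2), (x.1.1, x.2.2)⟩) ?_ ?_ ?_ ?_ ?_ <;>
    aesop (add simp [add_assoc, add_left_comm])

theorem succ_smul_sum_antidiagonal_succ {R M : Type*} [Semiring R] [AddCommMonoid M]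
    [Module R M] (v : ℕ → ℕ → M) (n : ℕ) :
    ((n : R) + 1) • ∑ p ∈ antidiagonal (n + 1), v p.1 p.2 =
      ∑ p ∈ antidiagonal n, ((p.1 : R) + 1) • v (p.1 + 1) p.2 +
        ∑ p ∈ antidiagonal n, ((p.2 : R) + 1) • v p.1 (p.2 + 1) := by
  have hweight : ∀ p ∈ antidiagonal (n + 1), ((n : R) + 1) • v p.1 p.2 =
      (p.1 : R) • v p.1 p.2 + (p.2 : R) • v p.1 p.2 := fun p hp ↦ by
    rw [← add_smul, ← Nat.cast_add, mem_antidiagonal.mp hp, Nat.cast_succ]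
  rw [smul_sum, sum_congr rfl hweight, sum_add_distrib, sum_antidiagonal_succ,
    sum_antidiagonal_succ']
  simp

theorem smul_apply_succ_eq_sum_antidiagonal {R M : Type*} [CommSemiring R] [AddCommMonoid M]
    [Module R M] {D u : ℕ → Module.End R M}
    (hrec : ∀ n : ℕ, ((n : R) + 1) • u (n + 1) = ∑ k ∈ range (n + 1), D (k + 1) * u (n - k))
    (n : ℕ) (x : M) :
    ((n : R) + 1) • u (n + 1) x = ∑ p ∈ antidiagonal n, D (p.1 + 1) (u p.2 x) := by
  rw [← LinearMap.smul_apply, hrec, ← sum_antidiagonal_eq_sum_range_succ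
    (fun i j ↦ D (i + 1) * u j), LinearMap.sum_apply]
  rfl

theorem apply_mul_eq_sum_antidiagonal_of_recursion {K A : Type*} [Field K] [CharZero K]
    [Semiring A] [Algebra K A] {F G H f g h : ℕ → Module.End K A}
    (hFGH : ∀ n (a b : A), F (n + 1) (a * b) = G (n + 1) a * b + a * H (n + 1) b)
    (hf0 : f 0 = 1) (hg0 : g 0 = 1) (hh0 : h 0 = 1)
    (hfrec : ∀ n : ℕ, ((n : K) + 1) • f (n + 1) = ∑ k ∈ range (n + 1), F (k + 1) * f (n - k))
    (hgrec : ∀ n : ℕ, ((n : K) + 1) • g (n + 1) = ∑ k ∈ range (n + 1), G (k + 1) * g (n - k))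
    (hhrec : ∀ n : ℕ, ((n : K) + 1) • h (n + 1) = ∑ k ∈ range (n + 1), H (k + 1) * h (n - k))
    (n : ℕ) (a b : A) :
    f n (a * b) = ∑ p ∈ antidiagonal n, g p.1 a * h p.2 b := by
  induction n using Nat.strong_induction_on with
  | _ n ih =>
  cases n with
  | zero => simp [hf0, hg0, hh0]
  | succ n =>
  refine smul_right_injective A (Nat.cast_add_one_ne_zero n : (n : K) + 1 ≠ 0) ?_
  calc ((n : K) + 1) • f (n + 1) (a * b)
      = ∑ p ∈ antidiagonal n, ∑ q ∈ antidiagonal p.2, F (p.1 + 1) (g q.1 a * h q.2 b) := by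
        rw [smul_apply_succ_eq_sum_antidiagonal hfrec]
        refine sum_congr rfl fun p hp ↦ ?_
        rw [ih p.2 (by have := mem_antidiagonal.mp hp; omega), map_sum]
    _ = ∑ p ∈ antidiagonal n, ∑ q ∈ antidiagonal p.2, G (p.1 + 1) (g q.1 a) * h q.2 b +
          ∑ p ∈ antidiagonal n, ∑ q ∈ antidiagonal p.2, g q.1 a * H (p.1 + 1) (h q.2 b) := by
        simp only [hFGH, sum_add_distrib]
    _ = ∑ p ∈ antidiagonal n, ((p.1 : K) + 1) • (g (p.1 + 1) a * h p.2 b) +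
          ∑ p ∈ antidiagonal n, ((p.2 : K) + 1) • (g p.1 a * h (p.2 + 1) b) := by
        rw [sum_antidiagonal_antidiagonal_assoc n fun k i j ↦ G (k + 1) (g i a) * h j b,
          sum_antidiagonal_antidiagonal_left_comm n fun k i j ↦ g i a * H (k + 1) (h j b)]
        congr 1 <;> refine sum_congr rfl fun p _ ↦ ?_
        · rw [← smul_mul_assoc, smul_apply_succ_eq_sum_antidiagonal hgrec, sum_mul]
        · rw [← mul_smul_comm, smul_apply_succ_eq_sum_antidiagonal hhrec, mul_sum]
    _ = ((n : K) + 1) • ∑ p ∈ antidiagonal (n + 1), g p.1 a * h p.2 b :=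
        (succ_smul_sum_antidiagonal_succ (fun i j ↦ g i a * h j b) n).symm

/-- If sequences `fₙ, gₙ, hₙ` are defined from a sequence of `{Gₙ,Hₙ}`-derivations `Fₙ` via
the recursions `(n+1) fₙ₊₁ = ∑ₖ Fₖ₊₁ ∘ fₙ₋ₖ` (etc.), then `{fₙ}` is a higher
`{gₙ,hₙ}`-derivation. -/
theorem recursion_gives_higher_gh_derivation
    {K A : Type*} [Field K] [CharZero K] [Ring A] [Algebra K A]
    (F G H : ℕ → Module.End K A)
    (hFGH : ∀ n, 1 ≤ n → ∀ a b : A,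
      F n (a * b) = G n a * b + a * H n b ∧ F n (a * b) = H n a * b + a * G n b)
    (f g h : ℕ → Module.End K A)
    (hf0 : f 0 = 1) (hg0 : g 0 = 1) (hh0 : h 0 = 1)
    (hfrec : ∀ n : ℕ, ((n : K) + 1) • f (n + 1) = ∑ k ∈ Finset.range (n + 1), F (k + 1) * f (n - k))
    (hgrec : ∀ n : ℕ, ((n : K) + 1) • g (n + 1) = ∑ k ∈ Finset.range (n + 1), G (k + 1) * g (n - k))
    (hhrec : ∀ n : ℕ, ((n : K) + 1) • h (n + 1) = ∑ k ∈ Finset.range (n + 1), H (k + 1) * h (n - k)) :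
    ∀ (n : ℕ) (a b : A),
      f n (a * b) = ∑ k ∈ Finset.range (n + 1), g k a * h (n - k) b ∧
      f n (a * b) = ∑ k ∈ Finset.range (n + 1), h k a * g (n - k) b := by
  intro n a b
  rw [← sum_antidiagonal_eq_sum_range_succ fun i j ↦ g i a * h j b,
    ← sum_antidiagonal_eq_sum_range_succ fun i j ↦ h i a * g j b]
  have hF (n : ℕ) := hFGH (n + 1) n.succ_pos
  exact ⟨apply_mul_eq_sum_antidiagonal_of_recursion (fun n a b ↦ (hF n a b).1)
      hf0 hg0 hh0 hfrec hgrec hhrec n a b,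
    apply_mul_eq_sum_antidiagonal_of_recursion (fun n a b ↦ (hF n a b).2)
      hf0 hh0 hg0 hfrec hhrec hgrec n a b⟩
end

section
/- Let {f_n} be a higher {g_n,h_n}-derivation on an algebra A over a field of characteristic zero with f_0 = g_0 = h_0 = I. Then there is a sequence {F_n} of {G_n,H_n}-derivations such that f_n = \sum_{i=1}^{n} \sum_{r_1 + \cdots + r_i = n, r_j \geq 1} \left( \prod_{j=1}^{i} \frac{1}{r_j + r_{j+1} + \cdots + r_i} \right) F_{r_1} \circ \cdots \circ F_{r_i}, and analogously g_n is given by the same formula in the G_{r_j}'s and h_n by the same formula in the H_{r_j}'s. -/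
open Finset in
/-- The map `∑_{i=1}^{n} ∑_{r₁+⋯+rᵢ=n, rⱼ≥1} (∏ⱼ 1/(rⱼ+⋯+rᵢ)) F_{r₁} ∘ ⋯ ∘ F_{rᵢ}`. -/
noncomputable def explicitHigherTerm {K V : Type*} [Field K] [AddCommGroup V] [Module K V]
    (F : ℕ → Module.End K V) (n : ℕ) : Module.End K V :=
  ∑ i ∈ Finset.Icc 1 n,
    ∑ r ∈ (Finset.Nat.antidiagonalTuple i n).filter (fun r => ∀ j, 0 < r j),
      (∏ j, (((∑ j' ∈ Finset.Ici j, r j') : ℕ) : K)⁻¹) •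
        (List.ofFn (fun j => F (r j))).prod


open Finset
noncomputable def Fseq {K V : Type*} [Field K] [AddCommGroup V] [Module K V]
    (f : ℕ → Module.End K V) : ℕ → Module.End K V
  | n => n • f n - ∑ k ∈ (Finset.Icc 1 (n-1)).attach, Fseq f k * f (n - k)
decreasing_by
  have := Finset.mem_Icc.mp k.2; omega

theorem Fseq_def {K V : Type*} [Field K] [AddCommGroup V] [Module K V]
    (f : ℕ → Module.End K V) (n : ℕ) :
    Fseq f n = n • f n - ∑ k ∈ Finset.Icc 1 (n-1), Fseq f k * f (n - k) := by
  rw [Fseq, Finset.sum_attach _ (fun k => Fseq f k * f (n - k))]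

theorem Fseq_zero {K V : Type*} [Field K] [AddCommGroup V] [Module K V]
    (f : ℕ → Module.End K V) : Fseq f 0 = 0 := by
  rw [Fseq_def]; simp

theorem Fseq_rec {K V : Type*} [Field K] [AddCommGroup V] [Module K V]
    (f : ℕ → Module.End K V) (hf0 : f 0 = 1) (n : ℕ) :
    n • f n = ∑ k ∈ Finset.Icc 1 n, Fseq f k * f (n - k) := by
  rcases Nat.eq_zero_or_pos n with rfl | hn
  · simp
  · have h1 : Finset.Icc 1 n = insert n (Finset.Icc 1 (n-1)) := by
      ext x; simp only [Finset.mem_Icc, Finset.mem_insert]; omega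
    rw [h1, Finset.sum_insert (by simp [Finset.mem_Icc]; omega)]
    rw [Nat.sub_self, hf0, mul_one, Fseq_def]
    abel

theorem sum_Ici_fin_succ {M : Type*} [AddCommMonoid M] {i : ℕ} (v : Fin (i+1) → M) (j : Fin i) :
    ∑ j' ∈ Finset.Ici j.succ, v j' = ∑ j' ∈ Finset.Ici j, v j'.succ := by
  apply Finset.sum_nbij' (i := fun j' => ⟨j'.val - 1, by have := j'.isLt; have := j.isLt; omega⟩) (j := Fin.succ)
  · intro x hx
    simp only [Finset.mem_Ici, Fin.le_def, Fin.val_succ] at *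
    omega
  · intro x hx
    simp only [Finset.mem_Ici, Fin.le_def, Fin.val_succ] at *
    omega
  · intro x hx
    simp only [Finset.mem_Ici, Fin.le_def, Fin.val_succ] at hx
    ext; simp; omega
  · intro x hx; ext; simp
  · intro x hx
    simp only [Finset.mem_Ici, Fin.le_def, Fin.val_succ] at hx
    congr 1; ext; simp; omega

theorem Ici_zero_fin {i : ℕ} : (Finset.Ici (0 : Fin (i+1))) = Finset.univ := by
  ext x; simp [Fin.zero_le]

theorem comp_split {M : Type*} [AddCommMonoid M] (i n : ℕ) (φ : (Fin (i+1) → ℕ) → M) :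
    ∑ r ∈ (Finset.Nat.antidiagonalTuple (i+1) n).filter (fun r => ∀ j, 0 < r j), φ r
      = ∑ k ∈ Finset.Icc 1 n,
          ∑ r' ∈ (Finset.Nat.antidiagonalTuple i (n - k)).filter (fun r => ∀ j, 0 < r j),
            φ (Fin.cons k r') := by
  refine Eq.trans ?_ (Finset.sum_sigma (σ := fun _ : ℕ => Fin i → ℕ) (Finset.Icc 1 n)
    (fun k => (Finset.Nat.antidiagonalTuple i (n-k)).filter (fun r => ∀ j, 0 < r j))
    (fun p => φ (Fin.cons p.1 p.2)))
  apply Finset.sum_nbij' (i := fun r => ⟨r 0, Fin.tail r⟩) (j := fun p => Fin.cons p.1 p.2)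
  · intro r hr
    simp only [Finset.mem_filter, Finset.Nat.mem_antidiagonalTuple] at hr
    obtain ⟨hsum, hpos⟩ := hr
    rw [Fin.sum_univ_succ] at hsum
    simp only [Finset.mem_sigma, Finset.mem_Icc, Finset.mem_filter,
      Finset.Nat.mem_antidiagonalTuple]
    refine ⟨⟨hpos 0, by omega⟩, ?_, ?_⟩
    · show ∑ j : Fin i, r (Fin.succ j) = n - r 0
      omega
    · intro j; exact hpos j.succ
  · intro p hp
    simp only [Finset.mem_sigma, Finset.mem_Icc, Finset.mem_filter,
      Finset.Nat.mem_antidiagonalTuple] at hp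
    obtain ⟨⟨h1, h2⟩, hsum, hpos⟩ := hp
    simp only [Finset.mem_filter, Finset.Nat.mem_antidiagonalTuple]
    constructor
    · rw [Fin.sum_cons, hsum]; omega
    · intro j
      refine Fin.cases ?_ ?_ j
      · simpa using (show 0 < p.1 by omega)
      · intro j'; simpa using hpos j'
  · intro r _; exact Fin.cons_self_tail r
  · intro p _; ext : 1 <;> simp
  · intro r _; exact congrArg φ (Fin.cons_self_tail r).symm

noncomputable def ehtB {K V : Type*} [Field K] [AddCommGroup V] [Module K V]
    (F : ℕ → Module.End K V) (i m : ℕ) : Module.End K V :=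
  ∑ r ∈ (Finset.Nat.antidiagonalTuple i m).filter (fun r => ∀ j, 0 < r j),
    (∏ j, (((∑ j' ∈ Finset.Ici j, r j') : ℕ) : K)⁻¹) •
      (List.ofFn (fun j => F (r j))).prod

theorem eht_eq_sum_B {K V : Type*} [Field K] [AddCommGroup V] [Module K V]
    (F : ℕ → Module.End K V) (n : ℕ) :
    explicitHigherTerm F n = ∑ i ∈ Finset.Icc 1 n, ehtB F i n := rfl

theorem filter_pos_empty (i m : ℕ) (h : m < i) :
    (Finset.Nat.antidiagonalTuple i m).filter (fun r => ∀ j, 0 < r j) = ∅ := by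
  rw [Finset.eq_empty_iff_forall_notMem]
  intro r hr
  simp only [Finset.mem_filter, Finset.Nat.mem_antidiagonalTuple] at hr
  obtain ⟨hsum, hpos⟩ := hr
  have h2 : (Finset.univ : Finset (Fin i)).card • 1 ≤ ∑ j, r j :=
    Finset.card_nsmul_le_sum _ _ _ (fun j _ => hpos j)
  simp only [Finset.card_univ, Fintype.card_fin, smul_eq_mul, mul_one] at h2
  omega

theorem ehtB_eq_zero {K V : Type*} [Field K] [AddCommGroup V] [Module K V]
    (F : ℕ → Module.End K V) {i m : ℕ} (h : m < i) : ehtB F i m = 0 := by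
  rw [ehtB, filter_pos_empty i m h, Finset.sum_empty]

theorem ehtB_one {K V : Type*} [Field K] [AddCommGroup V] [Module K V]
    (F : ℕ → Module.End K V) (n : ℕ) (hn : 1 ≤ n) :
    ehtB F 1 n = ((n : K))⁻¹ • F n := by
  rw [ehtB, Finset.Nat.antidiagonalTuple_one, Finset.filter_singleton]
  rw [if_pos (by intro j; fin_cases j <;> simpa using (show 0 < n by omega))]
  rw [Finset.sum_singleton]
  show (∏ j : Fin 1, (((∑ j' ∈ Finset.Ici j, ![n] j') : ℕ) : K)⁻¹) • (List.ofFn (fun j : Fin 1 => F (![n] j))).prod = ((n : K))⁻¹ • F n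
  have h1 : Finset.Ici (0 : Fin 1) = Finset.univ := by ext x; simp [Fin.zero_le, Fin.le_def, Fin.fin_one_eq_zero x]
  rw [Fin.prod_univ_one, h1, Fin.sum_univ_one]
  simp [List.ofFn_succ]


theorem ehtB_succ {K V : Type*} [Field K] [AddCommGroup V] [Module K V]
    (F : ℕ → Module.End K V) (i n : ℕ) :
    ehtB F (i+1) n = ((n : K))⁻¹ • ∑ k ∈ Finset.Icc 1 n, F k * ehtB F i (n-k) := by
  rw [ehtB, comp_split i n]
  rw [Finset.smul_sum]
  apply Finset.sum_congr rfl
  intro k hk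
  rw [Finset.mem_Icc] at hk
  rw [ehtB, Finset.mul_sum, Finset.smul_sum]
  apply Finset.sum_congr rfl
  intro r' hr'
  simp only [Finset.mem_filter, Finset.Nat.mem_antidiagonalTuple] at hr'
  obtain ⟨hsum, hpos⟩ := hr'
  have hw : (∏ j, (((∑ j' ∈ Finset.Ici j, (Fin.cons k r' : Fin (i+1) → ℕ) j') : ℕ) : K)⁻¹)
      = (n : K)⁻¹ * ∏ j, (((∑ j' ∈ Finset.Ici j, r' j') : ℕ) : K)⁻¹ := by
    rw [Fin.prod_univ_succ]
    congr 1
    · congr 2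
      have h0 : Finset.Ici (0 : Fin (i+1)) = Finset.univ := by
        ext x; simp [Fin.zero_le]
      rw [h0, Fin.sum_cons, hsum]
      omega
    · apply Finset.prod_congr rfl
      intro j _
      congr 2
      rw [sum_Ici_fin_succ]
      apply Finset.sum_congr rfl
      intro j' _
      rw [Fin.cons_succ]
  have hp : (List.ofFn (fun j => F ((Fin.cons k r' : Fin (i+1) → ℕ) j))).prod
      = F k * (List.ofFn (fun j => F (r' j))).prod := by
    rw [List.ofFn_succ]
    simp [Fin.cons_succ]
  rw [hw, hp, mul_smul, mul_smul_comm]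

theorem Icc_one_insert (n : ℕ) (hn : 1 ≤ n) :
    Finset.Icc 1 n = insert n (Finset.Icc 1 (n-1)) := by
  ext x; simp only [Finset.mem_Icc, Finset.mem_insert]; omega

theorem not_mem_Icc_self (n : ℕ) : n ∉ Finset.Icc 1 (n-1) := by
  simp only [Finset.mem_Icc]; omega

theorem eht_rec {K V : Type*} [Field K] [AddCommGroup V] [Module K V]
    (F : ℕ → Module.End K V) (n : ℕ) (hn : 1 ≤ n) :
    explicitHigherTerm F n
      = ((n:K))⁻¹ • (F n + ∑ k ∈ Finset.Icc 1 (n-1), F k * explicitHigherTerm F (n-k)) := by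
  rw [eht_eq_sum_B]
  have hre : ∑ i ∈ Finset.Icc 1 n, ehtB F i n
      = ehtB F 1 n + ∑ i ∈ Finset.Icc 1 (n-1), ehtB F (i+1) n := by
    have h1 : Finset.Icc 1 n = insert 1 (Finset.Icc 2 n) := by
      ext x; simp only [Finset.mem_Icc, Finset.mem_insert]; omega
    rw [h1, Finset.sum_insert (by simp only [Finset.mem_Icc]; omega)]
    congr 1
    apply Finset.sum_nbij' (i := fun i => i - 1) (j := fun i => i + 1)
    · intro x hx; simp only [Finset.mem_Icc] at *; omega
    · intro x hx; simp only [Finset.mem_Icc] at *; omega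
    · intro x hx; simp only [Finset.mem_Icc] at hx; omega
    · intro x hx; omega
    · intro x hx; simp only [Finset.mem_Icc] at hx; congr 1; omega
  rw [hre, ehtB_one F n hn]
  have h2 : ∀ i ∈ Finset.Icc 1 (n-1), ehtB F (i+1) n
      = (n:K)⁻¹ • ∑ k ∈ Finset.Icc 1 n, F k * ehtB F i (n-k) := fun i _ => ehtB_succ F i n
  rw [Finset.sum_congr rfl h2, ← Finset.smul_sum, Finset.sum_comm]
  have h3 : ∀ k ∈ Finset.Icc 1 n, (∑ i ∈ Finset.Icc 1 (n-1), F k * ehtB F i (n-k))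
      = F k * explicitHigherTerm F (n-k) := by
    intro k hk
    rw [Finset.mem_Icc] at hk
    rw [← Finset.mul_sum]
    congr 1
    rw [eht_eq_sum_B]
    symm
    apply Finset.sum_subset
    · intro x hx; simp only [Finset.mem_Icc] at *; omega
    · intro x hx hnx
      simp only [Finset.mem_Icc] at hx hnx
      exact ehtB_eq_zero F (by omega)
  rw [Finset.sum_congr rfl h3]
  rw [Icc_one_insert n hn, Finset.sum_insert (not_mem_Icc_self n)]
  rw [Nat.sub_self]
  have h0 : explicitHigherTerm F 0 = 0 := by rw [eht_eq_sum_B]; simp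
  rw [h0, mul_zero, zero_add, smul_add]

theorem eq_eht {K V : Type*} [Field K] [CharZero K] [AddCommGroup V] [Module K V]
    {f F : ℕ → Module.End K V} (hf0 : f 0 = 1)
    (hrec : ∀ n, n • f n = ∑ k ∈ Finset.Icc 1 n, F k * f (n - k)) :
    ∀ n, 1 ≤ n → f n = explicitHigherTerm F n := by
  intro n
  induction n using Nat.strong_induction_on with
  | _ n ih =>
    intro hn
    have hne : (n : K) ≠ 0 := Nat.cast_ne_zero.mpr (by omega)
    have h1 : (n : K) • f n
        = F n + ∑ k ∈ Finset.Icc 1 (n-1), F k * explicitHigherTerm F (n-k) := by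
      rw [Nat.cast_smul_eq_nsmul, hrec n, Icc_one_insert n hn,
        Finset.sum_insert (not_mem_Icc_self n), Nat.sub_self, hf0, mul_one]
      congr 1
      apply Finset.sum_congr rfl
      intro k hk
      rw [Finset.mem_Icc] at hk
      rw [ih (n-k) (by omega) (by omega)]
    rw [eht_rec F n hn, ← h1, inv_smul_smul₀ hne]

theorem Fseq_leibniz {K A : Type*} [Field K] [Ring A] [Algebra K A]
    (f g h : ℕ → Module.End K A)
    (hg0 : g 0 = 1) (hh0 : h 0 = 1)
    (hp : ∀ (n : ℕ) (a b : A),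
      f n (a * b) = ∑ k ∈ Finset.range (n + 1), g (n - k) a * h k b) :
    ∀ n (a b : A), Fseq f n (a * b) = Fseq g n a * b + a * Fseq h n b := by
  intro n
  induction n using Nat.strong_induction_on with
  | _ n ih =>
    intro a b
    rcases Nat.eq_zero_or_pos n with rfl | hn
    · simp [Fseq_zero]
    -- abbreviations
    set X := ∑ l ∈ Finset.Icc 1 (n-1), ∑ k ∈ Finset.range (n-l+1),
        Fseq g l (g (n - l - k) a) * h k b with hX
    set Y := ∑ l ∈ Finset.Icc 1 (n-1), ∑ k ∈ Finset.range (n-l+1),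
        g (n - l - k) a * Fseq h l (h k b) with hY
    -- LHS via definition
    have hF : Fseq f n (a * b)
        = n • f n (a * b) - ∑ l ∈ Finset.Icc 1 (n-1), Fseq f l (f (n - l) (a * b)) := by
      conv_lhs => rw [Fseq_def f n]
      simp only [LinearMap.sub_apply, LinearMap.smul_apply, LinearMap.coe_sum,
        Finset.sum_apply, Module.End.mul_apply]
    -- the G part of n • f n (a*b)
    have hGpart : ∀ k ∈ Finset.range (n+1),
        ((n-k) • g (n-k)) a * h k b
          = ∑ l ∈ Finset.Icc 1 (n-k), Fseq g l (g (n - l - k) a) * h k b := by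
      intro k hk
      rw [Fseq_rec g hg0 (n-k), LinearMap.coe_sum, Finset.sum_apply, Finset.sum_mul]
      apply Finset.sum_congr rfl
      intro l hl
      have hnk : n - k - l = n - l - k := Nat.sub_right_comm n k l
      rw [Module.End.mul_apply, hnk]
    have hHpart : ∀ k ∈ Finset.range (n+1),
        g (n-k) a * ((k • h k) b)
          = ∑ l ∈ Finset.Icc 1 k, g (n - k) a * Fseq h l (h (k - l) b) := by
      intro k hk
      rw [Fseq_rec h hh0 k, LinearMap.coe_sum, Finset.sum_apply, Finset.mul_sum]
      apply Finset.sum_congr rfl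
      intro l hl
      rw [Module.End.mul_apply]
    -- swap for the G part
    have swapA : ∑ k ∈ Finset.range (n+1), ∑ l ∈ Finset.Icc 1 (n-k),
          Fseq g l (g (n - l - k) a) * h k b
        = Fseq g n a * b + X := by
      rw [Finset.sum_comm' (t' := Finset.Icc 1 n) (s' := fun l => Finset.range (n - l + 1))
        (by intro k l; simp only [Finset.mem_range, Finset.mem_Icc]; omega)]
      rw [Icc_one_insert n hn, Finset.sum_insert (not_mem_Icc_self n)]
      congr 1
      rw [Nat.sub_self, zero_add, Finset.sum_range_one]
      simp [hg0, hh0]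
    -- swap and reindex for the H part
    have swapB : ∑ k ∈ Finset.range (n+1), ∑ l ∈ Finset.Icc 1 k,
          g (n - k) a * Fseq h l (h (k - l) b)
        = a * Fseq h n b + Y := by
      rw [Finset.sum_comm' (t' := Finset.Icc 1 n) (s' := fun l => Finset.Icc l n)
        (by intro k l; simp only [Finset.mem_Icc, Finset.mem_range]; omega)]
      have hre : ∀ l ∈ Finset.Icc 1 n,
          ∑ k ∈ Finset.Icc l n, g (n - k) a * Fseq h l (h (k - l) b)
            = ∑ k ∈ Finset.range (n - l + 1), g (n - l - k) a * Fseq h l (h k b) := by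
        intro l hl
        rw [Finset.mem_Icc] at hl
        apply Finset.sum_nbij' (i := fun k => k - l) (j := fun k => k + l)
        · intro x hx; simp only [Finset.mem_Icc, Finset.mem_range] at *; omega
        · intro x hx; simp only [Finset.mem_Icc, Finset.mem_range] at *; omega
        · intro x hx; simp only [Finset.mem_Icc] at hx; omega
        · intro x hx; omega
        · intro x hx
          simp only [Finset.mem_Icc] at hx
          have h1 : n - l - (x - l) = n - x := by omega
          have h2 : x - l = x - l := rfl
          rw [h1]
      rw [Finset.sum_congr rfl hre]
      rw [Icc_one_insert n hn, Finset.sum_insert (not_mem_Icc_self n)]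
      congr 1
      rw [Nat.sub_self, zero_add, Finset.sum_range_one]
      simp [hg0, hh0]
    -- compute n • f n (a*b)
    have hA : n • f n (a * b)
        = (Fseq g n a * b + X) + (a * Fseq h n b + Y) := by
      rw [hp n a b, Finset.smul_sum]
      rw [← swapA, ← swapB, ← Finset.sum_add_distrib]
      apply Finset.sum_congr rfl
      intro k hk
      rw [Finset.mem_range] at hk
      rw [← hGpart k (Finset.mem_range.mpr (by omega)),
          ← hHpart k (Finset.mem_range.mpr (by omega))]
      rw [LinearMap.smul_apply, LinearMap.smul_apply]
      rw [smul_mul_assoc, mul_smul_comm, ← add_nsmul]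
      congr 1
      omega
    -- the subtracted sum
    have hS : ∑ l ∈ Finset.Icc 1 (n-1), Fseq f l (f (n - l) (a * b)) = X + Y := by
      rw [hX, hY, ← Finset.sum_add_distrib]
      apply Finset.sum_congr rfl
      intro l hl
      rw [Finset.mem_Icc] at hl
      rw [hp (n-l) a b, map_sum, ← Finset.sum_add_distrib]
      apply Finset.sum_congr rfl
      intro k hk
      rw [ih l (by omega)]
    rw [hF, hA, hS]
    abel

/-- Theorem 2.4: a higher `{gₙ,hₙ}`-derivation with `f₀ = g₀ = h₀ = I` is given by the
explicit combinatorial formula in terms of a sequence of `{Gₙ,Hₙ}`-derivations. -/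
theorem higher_gh_derivation_explicit_formula
    {K A : Type*} [Field K] [CharZero K] [Ring A] [Algebra K A]
    (f g h : ℕ → Module.End K A)
    (hf0 : f 0 = 1) (hg0 : g 0 = 1) (hh0 : h 0 = 1)
    (hhd : ∀ (n : ℕ) (a b : A),
      f n (a * b) = ∑ k ∈ Finset.range (n + 1), g (n - k) a * h k b ∧
      f n (a * b) = ∑ k ∈ Finset.range (n + 1), h (n - k) a * g k b) :
    ∃ F G H : ℕ → Module.End K A,
      (∀ n, 1 ≤ n → ∀ a b : A,
        F n (a * b) = G n a * b + a * H n b ∧ F n (a * b) = H n a * b + a * G n b) ∧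
      (∀ n, 1 ≤ n →
        f n = explicitHigherTerm F n ∧
        g n = explicitHigherTerm G n ∧
        h n = explicitHigherTerm H n) := by
  refine ⟨Fseq f, Fseq g, Fseq h, ?_, ?_⟩
  · intro n _ a b
    exact ⟨Fseq_leibniz f g h hg0 hh0 (fun n a b => (hhd n a b).1) n a b,
           Fseq_leibniz f h g hh0 hg0 (fun n a b => (hhd n a b).2) n a b⟩
  · intro n hn
    exact ⟨eq_eht hf0 (Fseq_rec f hf0) n hn, eq_eht hg0 (Fseq_rec g hg0) n hn,
           eq_eht hh0 (Fseq_rec h hh0) n hn⟩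
end

section
/- Conversely, if linear maps f_n satisfy f_0 = I and the recursion (n+1) f_{n+1} = \sum_{k=0}^{n} F_{k+1} \circ f_{n-k} for a sequence of linear maps {F_m}_{m \geq 1} on a vector space over a field of characteristic zero, then f_n equals the explicit formula f_n = \sum_{i=1}^{n} \sum_{r_1 + \cdots + r_i = n, r_j \geq 1} \left( \prod_{j=1}^{i} \frac{1}{r_j + \cdots + r_i} \right) F_{r_1} \circ \cdots \circ F_{r_i} for all n \geq 1. -/
open Finset

theorem eq_of_convolution_recursion {K A : Type*} [Field K] [CharZero K] [Semiring A] [Module K A]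
    {F f g : ℕ → A} (h0 : f 0 = g 0)
    (hf : ∀ n : ℕ, ((n : K) + 1) • f (n + 1) = ∑ k ∈ range (n + 1), F (k + 1) * f (n - k))
    (hg : ∀ n : ℕ, ((n : K) + 1) • g (n + 1) = ∑ k ∈ range (n + 1), F (k + 1) * g (n - k)) :
    f = g := by
  funext n
  induction n using Nat.strong_induction_on with
  | _ n ih =>
    rcases n with _ | n
    · exact h0
    · refine smul_right_injective A (Nat.cast_add_one_ne_zero (R := K) n) ?_
      simp only [hf, hg]
      exact sum_congr rfl fun k _ => by rw [ih (n - k) (by omega)]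

def positiveAntidiagonalTuple (i n : ℕ) : Finset (Fin i → ℕ) :=
  (Nat.antidiagonalTuple i n).filter fun r => ∀ j, 0 < r j

lemma mem_positiveAntidiagonalTuple {i n : ℕ} {r : Fin i → ℕ} :
    r ∈ positiveAntidiagonalTuple i n ↔ ∑ j, r j = n ∧ ∀ j, 0 < r j := by
  rw [positiveAntidiagonalTuple, mem_filter, Nat.mem_antidiagonalTuple]

lemma positiveAntidiagonalTuple_zero_zero : positiveAntidiagonalTuple 0 0 = {![]} := by
  simp [positiveAntidiagonalTuple, Nat.antidiagonalTuple_zero_zero]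

lemma positiveAntidiagonalTuple_zero_succ (n : ℕ) : positiveAntidiagonalTuple 0 (n + 1) = ∅ := by
  simp [positiveAntidiagonalTuple, Nat.antidiagonalTuple_zero_succ]

lemma positiveAntidiagonalTuple_eq_empty_of_lt {i n : ℕ} (h : n < i) :
    positiveAntidiagonalTuple i n = ∅ := by
  refine eq_empty_of_forall_notMem fun r hr => ?_
  rw [mem_positiveAntidiagonalTuple] at hr
  have : i ≤ ∑ j, r j := by
    simpa using Finset.card_nsmul_le_sum univ r 1 fun j _ => hr.2 j
  omega

lemma sum_positiveAntidiagonalTuple_succ_succ {M : Type*} [AddCommMonoid M] (i n : ℕ)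
    (φ : (Fin (i + 1) → ℕ) → M) :
    ∑ r ∈ positiveAntidiagonalTuple (i + 1) (n + 1), φ r =
      ∑ k ∈ range (n + 1), ∑ t ∈ positiveAntidiagonalTuple i (n - k), φ (Fin.cons (k + 1) t) := by
  rw [sum_sigma']
  refine sum_nbij' (fun r => ⟨r 0 - 1, Fin.tail r⟩) (fun q => Fin.cons (q.1 + 1) q.2)
    ?_ ?_ ?_ ?_ ?_
  · intro r hr
    simp only [mem_sigma, mem_range, mem_positiveAntidiagonalTuple, Fin.sum_univ_succ] at hr ⊢
    obtain ⟨hsum, hpos⟩ := hr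
    have h0 := hpos 0
    exact ⟨by omega, by simp only [Fin.tail]; omega, fun j => hpos j.succ⟩
  · rintro ⟨k, t⟩ hq
    simp only [mem_sigma, mem_range, mem_positiveAntidiagonalTuple, Fin.sum_univ_succ,
      Fin.cons_zero, Fin.cons_succ] at hq ⊢
    exact ⟨by omega, Fin.cases (Nat.succ_pos k) hq.2.2⟩
  · intro r hr
    have h0 := (mem_positiveAntidiagonalTuple.1 hr).2 0
    simp only [Nat.sub_add_cancel h0, Fin.cons_self_tail]
  · rintro ⟨k, t⟩ -
    simp only [Fin.cons_zero, Nat.add_sub_cancel, Fin.tail_cons]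
  · intro r hr
    have h0 := (mem_positiveAntidiagonalTuple.1 hr).2 0
    simp only [Nat.sub_add_cancel h0, Fin.cons_self_tail]

section Composition

variable (K : Type*) {A : Type*} [Field K] [Semiring A] [Algebra K A]

def compositionCoeff {i : ℕ} (r : Fin i → ℕ) : K :=
  ∏ j, ((∑ j' ∈ Ici j, r j' : ℕ) : K)⁻¹

lemma compositionCoeff_cons {i : ℕ} (k : ℕ) (t : Fin i → ℕ) :
    compositionCoeff K (Fin.cons k t : Fin (i + 1) → ℕ) =
      ((k + ∑ j, t j : ℕ) : K)⁻¹ * compositionCoeff K t := by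
  have hIci_zero : Ici (0 : Fin (i + 1)) = univ := Ici_bot
  simp only [compositionCoeff, Fin.prod_univ_succ, hIci_zero, Fin.sum_univ_succ, Fin.sum_Ici_succ,
    Fin.cons_zero, Fin.cons_succ]

def compositionTerm (F : ℕ → A) {i : ℕ} (r : Fin i → ℕ) : A :=
  compositionCoeff K r • (List.ofFn fun j => F (r j)).prod

lemma compositionTerm_cons (F : ℕ → A) {i : ℕ} (k : ℕ) (t : Fin i → ℕ) :
    compositionTerm K F (Fin.cons k t : Fin (i + 1) → ℕ) =
      ((k + ∑ j, t j : ℕ) : K)⁻¹ • (F k * compositionTerm K F t) := by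
  simp only [compositionTerm, compositionCoeff_cons, List.ofFn_succ, Fin.cons_zero, Fin.cons_succ,
    List.prod_cons, mul_smul_comm, smul_smul]

def compositionSum (F : ℕ → A) (n : ℕ) : A :=
  ∑ i ∈ range (n + 1), ∑ r ∈ positiveAntidiagonalTuple i n, compositionTerm K F r

lemma compositionSum_zero (F : ℕ → A) : compositionSum K F 0 = 1 := by
  simp [compositionSum, positiveAntidiagonalTuple_zero_zero, compositionTerm, compositionCoeff]

lemma compositionSum_eq_sum_range (F : ℕ → A) {n N : ℕ} (h : n < N) :
    compositionSum K F n =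
      ∑ i ∈ range N, ∑ r ∈ positiveAntidiagonalTuple i n, compositionTerm K F r := by
  refine sum_subset (range_subset_range.2 h) fun i _ hi => ?_
  rw [positiveAntidiagonalTuple_eq_empty_of_lt (by simpa using hi), sum_empty]

lemma compositionSum_succ [CharZero K] (F : ℕ → A) (n : ℕ) :
    ((n : K) + 1) • compositionSum K F (n + 1) =
      ∑ k ∈ range (n + 1), F (k + 1) * compositionSum K F (n - k) := by
  have hterm : ∀ i, ∀ k ∈ range (n + 1), ∀ t ∈ positiveAntidiagonalTuple i (n - k),
      ((n : K) + 1) • compositionTerm K F (Fin.cons (k + 1) t : Fin (i + 1) → ℕ) =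
        F (k + 1) * compositionTerm K F t := by
    intro i k hk t ht
    have hsum : k + 1 + ∑ j, t j = n + 1 := by
      rw [(mem_positiveAntidiagonalTuple.1 ht).1]
      rw [mem_range] at hk
      omega
    rw [compositionTerm_cons, hsum, smul_smul, Nat.cast_succ,
      mul_inv_cancel₀ (Nat.cast_add_one_ne_zero n), one_smul]
  calc ((n : K) + 1) • compositionSum K F (n + 1)
      = ∑ i ∈ range (n + 1), ∑ k ∈ range (n + 1), ∑ t ∈ positiveAntidiagonalTuple i (n - k),
          ((n : K) + 1) • compositionTerm K F (Fin.cons (k + 1) t : Fin (i + 1) → ℕ) := by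
        simp only [compositionSum, sum_range_succ' _ (n + 1), positiveAntidiagonalTuple_zero_succ,
          sum_empty, add_zero, sum_positiveAntidiagonalTuple_succ_succ, smul_sum]
    _ = ∑ k ∈ range (n + 1), ∑ i ∈ range (n + 1), ∑ t ∈ positiveAntidiagonalTuple i (n - k),
          F (k + 1) * compositionTerm K F t := by
        rw [sum_comm]
        exact sum_congr rfl fun k hk => sum_congr rfl fun i _ => sum_congr rfl (hterm i k hk)
    _ = ∑ k ∈ range (n + 1), F (k + 1) * compositionSum K F (n - k) := by
        refine sum_congr rfl fun k _ => ?_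
        rw [compositionSum_eq_sum_range K F (N := n + 1) (by omega)]
        simp only [mul_sum]

lemma compositionSum_eq_explicitHigherTerm {V : Type*} [AddCommGroup V] [Module K V]
    (F : ℕ → Module.End K V) {n : ℕ} (hn : 0 < n) :
    compositionSum K F n = explicitHigherTerm F n := by
  obtain ⟨m, rfl⟩ := Nat.exists_eq_add_one_of_ne_zero hn.ne'
  rw [compositionSum, sum_range_eq_add_Ico _ (by omega), positiveAntidiagonalTuple_zero_succ,
    sum_empty, zero_add, Ico_add_one_right_eq_Icc]
  rfl

end Composition

/-- If `f₀ = I` and `(n+1) fₙ₊₁ = ∑ₖ Fₖ₊₁ ∘ fₙ₋ₖ`, then `fₙ` is given by the explicit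
combinatorial formula. -/
theorem recursion_gives_explicit_formula
    {K V : Type*} [Field K] [CharZero K] [AddCommGroup V] [Module K V]
    (F : ℕ → Module.End K V) (f : ℕ → Module.End K V)
    (hf0 : f 0 = 1)
    (hrec : ∀ n : ℕ, ((n : K) + 1) • f (n + 1) = ∑ k ∈ Finset.range (n + 1), F (k + 1) * f (n - k)) :
    ∀ n, 1 ≤ n → f n = explicitHigherTerm F n := by
  intro n hn
  rw [← compositionSum_eq_explicitHigherTerm K F hn]
  refine congrFun (eq_of_convolution_recursion (hf0.trans (compositionSum_zero K F).symm) hrec ?_) n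
  exact compositionSum_succ K F
end

section
/- Every Jordan higher generalized derivation {f_n} with f_0 = d_0 = I on a semiprime algebra A over a field of characteristic zero is a higher {f_n, d_n}-derivation: f_n(ab) = \sum_{k=0}^{n} f_{n-k}(a) d_k(b) = \sum_{k=0}^{n} d_{n-k}(a) f_k(b) for all a, b and n. -/
/-!
Encode the families as additive maps `F D : A → A⟦X⟧`, `a ↦ ∑ fₙ(a) Xⁿ` and `a ↦ ∑ dₙ(a) Xⁿ`.
With `x ∘ y = x y + y x`, the hypothesis reads `F (a ∘ b) = F a ∘ D b`, and the claim
`F (a b) = F a * D b = D a * F b`.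

Putting `a = 1` gives `2 F b = c ∘ D b` with `c = F 1`. Expanding `2 F (a ∘ b)` in two ways and
using the symmetry in `a, b` shows that `c` commutes with every `D a * D b - D b * D a`; in a
semiprime ring this makes the coefficients of `c` central, one degree at a time. Then `D` is a
Jordan homomorphism and `F = c * D`, so everything reduces to: a Jordan homomorphism
`D : A → A⟦X⟧` that is the identity modulo `X` is multiplicative. If the defect
`D (a b) - D a * D b` vanishes below degree `n`, its coefficient `e a b` of degree `n` is
biadditive and satisfies `e x [a, b] + [a, b] x e = 0`; Brešar's linearization argument turns this
into `e x [c, t] = 0` for all `c, t, x`, so `e` is central, and a last use of the Jordan identity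
gives `e³ = 0`, hence `e = 0`.
-/

open PowerSeries

theorem add_self_injective {M : Type*} [AddMonoid M] [IsAddTorsionFree M] :
    Function.Injective fun x : M => x + x := by
  simpa only [← two_nsmul] using nsmul_right_injective (M := M) two_ne_zero

theorem eq_zero_of_add_self_eq_zero {M : Type*} [AddMonoid M] [IsAddTorsionFree M] {x : M}
    (h : x + x = 0) : x = 0 :=
  add_self_injective (by simpa using h)

instance PowerSeries.instIsAddTorsionFree {R : Type*} [Semiring R] [IsAddTorsionFree R] :
    IsAddTorsionFree R⟦X⟧ :=
  inferInstanceAs (IsAddTorsionFree ((Unit →₀ ℕ) → R))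

def IsSemiprimeRing (A : Type*) [Ring A] : Prop :=
  ∀ a : A, (∀ x : A, a * x * a = 0) → a = 0

namespace IsSemiprimeRing

variable {A : Type*} [Ring A] (hA : IsSemiprimeRing A)
include hA

theorem sandwich_eq_zero_of_eq {p q r s : A} (h : ∀ x, p * x * q = r * x * s)
    (h' : ∀ y, s * y * p = 0) (x : A) : p * x * q = 0 :=
  hA _ fun y => calc
    p * x * q * y * (p * x * q) = r * x * s * y * (p * x * q) := by rw [← h x]
    _ = r * x * (s * y * p) * x * q := by noncomm_ring
    _ = 0 := by rw [h' y]; noncomm_ring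

theorem sandwich_swap {p q : A} (h : ∀ x, p * x * q = 0) (x : A) : q * x * p = 0 :=
  hA.sandwich_eq_zero_of_eq (fun _ => rfl) h x

theorem sandwich_eq_zero_of_add [IsAddTorsionFree A] {p q : A}
    (h : ∀ x, p * x * q + q * x * p = 0) (x : A) : p * x * q = 0 :=
  hA _ fun y => eq_zero_of_add_self_eq_zero <| by
    linear_combination (norm := noncomm_ring)
      p * x * h y * x * q - h (x * p * y) * x * q + h x * y * (p * x * q)

theorem commute_of_sandwich_commutator_eq_zero {u : A}
    (h : ∀ w y, u * w * (u * y - y * u) = 0) (y : A) : Commute u y :=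
  sub_eq_zero.mp <| hA _ fun z => by
    linear_combination (norm := noncomm_ring) h (y * z) y - y * h z y

theorem commute_of_commute_commutator {q : A} (h : ∀ x y, Commute q (x * y - y * x)) (y : A) :
    Commute q y := by
  have hq : ∀ x y, (x * q - q * x) * (q * y - y * q) = 0 := fun x y => by
    linear_combination (norm := noncomm_ring) (h x (q * y)).eq - q * (h x y).eq - (h x q).eq * y
  refine (sub_eq_zero.mp <| hA _ fun z => ?_).symm
  linear_combination (norm := noncomm_ring) hq y z * y - hq y (z * y)

theorem eq_zero_of_commute_of_mul_self_eq_zero {u : A} (hu : ∀ y, Commute u y)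
    (h : u * u = 0) : u = 0 :=
  hA u fun x => by rw [mul_assoc, ← (hu x).eq, ← mul_assoc, h, zero_mul]

theorem sandwich_commutator_eq_zero [IsAddTorsionFree A] (e : A → A → A)
    (he₁ : ∀ a a' b, e (a + a') b = e a b + e a' b)
    (he₂ : ∀ a b b', e a (b + b') = e a b + e a b')
    (h : ∀ a b x, e a b * x * (a * b - b * a) + (a * b - b * a) * x * e a b = 0)
    (a b c t x : A) : e a b * x * (c * t - t * c) = 0 := by
  have h₁ : ∀ a b x, e a b * x * (a * b - b * a) = 0 := fun a b =>
    hA.sandwich_eq_zero_of_add (h a b)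
  have h₂ : ∀ a b t x, e a b * x * (a * t - t * a) = 0 := fun a b t =>
    hA.sandwich_eq_zero_of_eq (r := -e a t) (s := a * b - b * a)
      (fun x => by
        have := h₁ a (b + t) x
        rw [he₂] at this
        linear_combination (norm := noncomm_ring) this - h₁ a b x - h₁ a t x)
      (hA.sandwich_swap (h₁ a b))
  exact hA.sandwich_eq_zero_of_eq (r := -e c b) (s := a * t - t * a)
    (fun x => by
      have := h₂ (a + c) b t x
      rw [he₁] at this
      linear_combination (norm := noncomm_ring) this - h₂ a b t x - h₂ c b t x)
    (hA.sandwich_swap (h₂ a b t)) x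

end IsSemiprimeRing

namespace PowerSeries

open Finset.HasAntidiagonal

variable {R : Type*}

theorem coeff_mul_eq_coeff_mul_constantCoeff [Semiring R] {p : R⟦X⟧} {n : ℕ}
    (hp : ∀ m < n, coeff m p = 0) (q : R⟦X⟧) :
    coeff n (p * q) = coeff n p * constantCoeff q := by
  rw [coeff_mul, Finset.sum_eq_single (n, 0), coeff_zero_eq_constantCoeff_apply]
  · rintro ⟨i, j⟩ hij hne
    rw [mem_antidiagonal] at hij
    rw [hp i (by grind), zero_mul]
  · simp

theorem coeff_mul_eq_constantCoeff_mul_coeff [Semiring R] {p : R⟦X⟧} {n : ℕ}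
    (hp : ∀ m < n, coeff m p = 0) (q : R⟦X⟧) :
    coeff n (q * p) = constantCoeff q * coeff n p := by
  rw [coeff_mul, Finset.sum_eq_single (0, n), coeff_zero_eq_constantCoeff_apply]
  · rintro ⟨i, j⟩ hij hne
    rw [mem_antidiagonal] at hij
    rw [hp j (by grind), mul_zero]
  · simp

theorem coeff_commutator [Ring R] (p q : R⟦X⟧) (n : ℕ) :
    coeff n (p * q - q * p) =
      ∑ x ∈ antidiagonal n, (coeff x.1 p * coeff x.2 q - coeff x.2 q * coeff x.1 p) := by
  rw [map_sub, coeff_mul, coeff_mul, ← Finset.Nat.sum_antidiagonal_swap (f := fun x =>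
    coeff x.1 q * coeff x.2 p), ← Finset.sum_sub_distrib]
  rfl

theorem commute_of_forall_coeff_commute [Semiring R] {p : R⟦X⟧}
    (hp : ∀ i y, Commute (coeff i p) y) (q : R⟦X⟧) : Commute p q := by
  ext n
  rw [coeff_mul, coeff_mul, ← Finset.Nat.sum_antidiagonal_swap]
  exact Finset.sum_congr rfl fun x _ => hp x.2 _

theorem eq_zero_of_mul_add_mul_eq_zero [Semiring R] [IsAddTorsionFree R] {c p : R⟦X⟧}
    (hc : constantCoeff c = 1) (h : c * p + p * c = 0) : p = 0 := by
  ext n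
  induction n using Nat.strong_induction_on with
  | _ n ih =>
    have hn := congrArg (coeff n) h
    rw [map_add, coeff_mul_eq_constantCoeff_mul_coeff ih, coeff_mul_eq_coeff_mul_constantCoeff ih,
      hc, one_mul, mul_one, map_zero] at hn
    rw [eq_zero_of_add_self_eq_zero hn, map_zero]

end PowerSeries

section JordanSeries

variable {A : Type*} [Ring A]

noncomputable def mulDefect (D : A →+ A⟦X⟧) (a b : A) : A⟦X⟧ := D (a * b) - D a * D b

theorem mulDefect_add_left (D : A →+ A⟦X⟧) (a a' b : A) :
    mulDefect D (a + a') b = mulDefect D a b + mulDefect D a' b := by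
  simp only [mulDefect, add_mul, map_add]
  abel

theorem mulDefect_add_right (D : A →+ A⟦X⟧) (a b b' : A) :
    mulDefect D a (b + b') = mulDefect D a b + mulDefect D a b' := by
  simp only [mulDefect, mul_add, map_add]
  abel

theorem constantCoeff_mulDefect {D : A →+ A⟦X⟧} (hD0 : ∀ a, constantCoeff (D a) = a) (a b : A) :
    constantCoeff (mulDefect D a b) = 0 := by
  simp [mulDefect, hD0]

variable {D : A →+ A⟦X⟧} (hJ : ∀ a b, D (a * b + b * a) = D a * D b + D b * D a)
include hJ

theorem mulDefect_swap (a b : A) : mulDefect D b a = -mulDefect D a b := by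
  have h := hJ a b
  rw [map_add] at h
  simp only [mulDefect]
  linear_combination (norm := noncomm_ring) h

theorem coeff_C_mul_map_commutator {u : A} (hu : ∀ c t, u * (c * t - t * c) = 0) (a b : A)
    (m : ℕ) : coeff m (C u * D (a * b - b * a))
      = u * coeff m (mulDefect D a b + mulDefect D a b) := by
  have hD : D (a * b - b * a)
      = (D a * D b - D b * D a) + (mulDefect D a b - mulDefect D b a) := by
    simp only [mulDefect, map_sub]
    abel
  rw [coeff_C_mul, hD, mulDefect_swap hJ a b, sub_neg_eq_add, map_add, mul_add, coeff_commutator,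
    Finset.mul_sum, Finset.sum_eq_zero fun x _ => hu _ _, zero_add]

variable [IsAddTorsionFree A]

theorem map_mul_self_of_jordan (u : A) : D (u * u) = D u * D u :=
  add_self_injective (by simpa only [map_add] using hJ u u)

theorem map_mul_mul_self_of_jordan (u x : A) : D (u * x * u) = D u * D x * D u := by
  refine add_self_injective ?_
  have h : u * x * u + u * x * u = ((u * x + x * u) * u + u * (u * x + x * u))
      - (u * u * x + x * (u * u)) := by noncomm_ring
  simp only [← map_add, h, map_sub, hJ, map_mul_self_of_jordan hJ]
  noncomm_ring

theorem map_mul_mul_add_of_jordan (u w x : A) :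
    D (u * x * w + w * x * u) = D u * D x * D w + D w * D x * D u := by
  have h := map_mul_mul_self_of_jordan hJ (u + w) x
  rw [show (u + w) * x * (u + w) = u * x * u + (u * x * w + w * x * u) + w * x * w by noncomm_ring]
    at h
  simp only [map_add, map_mul_mul_self_of_jordan hJ] at h
  rw [map_add]
  linear_combination (norm := noncomm_ring) h

theorem coeff_mulDefect_sandwich_commutator_add {n : ℕ} (hD0 : ∀ a, constantCoeff (D a) = a)
    {a b : A} (hlow : ∀ m < n, coeff m (mulDefect D a b) = 0) (x : A) :
    coeff n (mulDefect D a b) * x * (a * b - b * a)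
      + (a * b - b * a) * x * coeff n (mulDefect D a b) = 0 := by
  set E := mulDefect D a b
  have hE0 : constantCoeff E = 0 := constantCoeff_mulDefect hD0 a b
  -- `D (ab·x·ba + ba·x·ab)`, expanded once by the linearized Jordan identity and once as
  -- `D (a(bxb)a) + D (b(axa)b)`.
  have hser : E * (D x * (D b * D a - D a * D b)) + (D b * D a - D a * D b) * D x * E
      - (E * (D x * E) + E * (D x * E)) = 0 := by
    have h := map_mul_mul_add_of_jordan hJ (a * b) (b * a) x
    rw [show a * b * x * (b * a) + b * a * x * (a * b) = a * (b * x * b) * a + b * (a * x * a) * b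
      by noncomm_ring] at h
    simp only [map_add, map_mul_mul_self_of_jordan hJ] at h
    rw [show D (a * b) = D a * D b + E from (add_sub_cancel _ _).symm,
      show D (b * a) = D b * D a - E by rw [← neg_neg E, ← mulDefect_swap hJ]; simp [mulDefect]] at h
    linear_combination (norm := noncomm_ring) -h
  have h := congrArg (coeff n) hser
  simp only [map_sub, map_add, map_zero, coeff_mul_eq_coeff_mul_constantCoeff hlow,
    coeff_mul_eq_constantCoeff_mul_coeff hlow, map_mul, hD0, hE0] at h
  linear_combination (norm := noncomm_ring) -h

end JordanSeries

namespace IsSemiprimeRing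

variable {A : Type*} [Ring A] [IsAddTorsionFree A] (hA : IsSemiprimeRing A) {D : A →+ A⟦X⟧}
  (hD0 : ∀ a, constantCoeff (D a) = a) (hJ : ∀ a b, D (a * b + b * a) = D a * D b + D b * D a)
include hA hD0 hJ

theorem coeff_mulDefect_sandwich_commutator_eq_zero {n : ℕ}
    (hlow : ∀ a b, ∀ m < n, coeff m (mulDefect D a b) = 0) (a b c t x : A) :
    coeff n (mulDefect D a b) * x * (c * t - t * c) = 0 :=
  hA.sandwich_commutator_eq_zero (fun a b => coeff n (mulDefect D a b))
    (by simp [mulDefect_add_left]) (by simp [mulDefect_add_right])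
    (fun a b => coeff_mulDefect_sandwich_commutator_add hJ hD0 (hlow a b)) a b c t x

theorem coeff_mulDefect_eq_zero {n : ℕ} (hlow : ∀ a b, ∀ m < n, coeff m (mulDefect D a b) = 0)
    (a b : A) : coeff n (mulDefect D a b) = 0 := by
  have kill := hA.coeff_mulDefect_sandwich_commutator_eq_zero hD0 hJ hlow a b
  set u := coeff n (mulDefect D a b)
  have hu : ∀ y, Commute u y :=
    hA.commute_of_sandwich_commutator_eq_zero fun w y => kill u y w
  have hu_kill : ∀ c t, u * (c * t - t * c) = 0 := fun c t => by simpa using kill c t 1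
  have hC : ∀ p, Commute (C u) p := commute_of_forall_coeff_commute fun i y => by
    rw [coeff_C]
    split_ifs
    exacts [hu y, Commute.zero_left y]
  -- `u` kills the low coefficients of `D [a, b]` and `u * dₙ [a, b] = 2 u²`; the Jordan identity
  -- for the orthogonal pair `u, [a, b]` then gives `4 u³ = 0`.
  have hlow_w : ∀ m < n, coeff m (C u * D (a * b - b * a)) = 0 := fun m hm => by
    rw [coeff_C_mul_map_commutator hJ hu_kill, map_add, hlow a b m hm, add_zero, mul_zero]
  have hJ_uw : D u * D (a * b - b * a) + D (a * b - b * a) * D u = 0 := by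
    rw [← hJ, hu_kill, ← (hu _).eq, hu_kill, add_zero, map_zero]
  have hcube : (u * u * u + u * u * u) + (u * u * u + u * u * u) = 0 := by
    have h := congrArg (coeff n) (congrArg (C u * ·) hJ_uw)
    rw [mul_add, ← mul_assoc, (hC (D u)).eq, mul_assoc (D u), ← mul_assoc (C u), map_add,
      coeff_mul_eq_constantCoeff_mul_coeff hlow_w, coeff_mul_eq_coeff_mul_constantCoeff hlow_w,
      coeff_C_mul_map_commutator hJ hu_kill, hD0, mul_zero, map_zero, map_add] at h
    linear_combination (norm := noncomm_ring) h
  have hu3 : u * u * u = 0 := eq_zero_of_add_self_eq_zero (eq_zero_of_add_self_eq_zero hcube)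
  have hu2 : u * u = 0 := hA.eq_zero_of_commute_of_mul_self_eq_zero
    (fun y => (hu y).mul_left (hu y)) (by rw [← mul_assoc, hu3, zero_mul])
  exact hA.eq_zero_of_commute_of_mul_self_eq_zero hu hu2

theorem map_mul_of_jordan (a b : A) : D (a * b) = D a * D b := by
  have h : ∀ n a b, coeff n (mulDefect D a b) = 0 := fun n => by
    induction n using Nat.strong_induction_on with
    | _ n ih => exact hA.coeff_mulDefect_eq_zero hD0 hJ fun a b m hm => ih m hm a b
  exact sub_eq_zero.mp (ext fun n => by rw [← mulDefect, h, map_zero])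

end IsSemiprimeRing

section GeneralizedJordanSeries

variable {A : Type*} [Ring A] {F D : A →+ A⟦X⟧}
  (hF : ∀ a b, F (a * b + b * a) = F a * D b + D b * F a)
include hF

theorem map_add_self_of_generalized_jordan (b : A) : F (b + b) = F 1 * D b + D b * F 1 := by
  simpa using hF 1 b

theorem jordan_map_one_map_jordan (a b : A) :
    F 1 * D (a * b + b * a) + D (a * b + b * a) * F 1
      = (F 1 * D a + D a * F 1) * D b + D b * (F 1 * D a + D a * F 1) := by
  rw [← map_add_self_of_generalized_jordan hF, ← map_add_self_of_generalized_jordan hF, map_add, hF,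
    map_add]
  noncomm_ring

theorem commute_map_one_commutator (a b : A) :
    F 1 * (D a * D b - D b * D a) = (D a * D b - D b * D a) * F 1 := by
  have h := jordan_map_one_map_jordan hF a b
  rw [add_comm (a * b), jordan_map_one_map_jordan hF b a] at h
  linear_combination (norm := noncomm_ring) -h

theorem IsSemiprimeRing.commute_map_one (hA : IsSemiprimeRing A)
    (hD0 : ∀ a, constantCoeff (D a) = a) (p : A⟦X⟧) : Commute (F 1) p := by
  refine commute_of_forall_coeff_commute (fun i => ?_) p
  induction i using Nat.strong_induction_on with
  | _ i ih =>
    refine hA.commute_of_commute_commutator fun a b => ?_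
    have h := congrArg (coeff i) (sub_eq_zero.mpr (commute_map_one_commutator hF a b))
    rw [map_zero, coeff_commutator, Finset.sum_eq_single (i, 0)] at h
    · rw [coeff_zero_eq_constantCoeff_apply, map_sub, map_mul, map_mul, hD0, hD0] at h
      exact sub_eq_zero.mp h
    · rintro ⟨k, j⟩ hkj hne
      rw [Finset.HasAntidiagonal.mem_antidiagonal] at hkj
      exact sub_eq_zero.mpr (ih k (by grind) _)
    · simp

variable [IsAddTorsionFree A]

theorem IsSemiprimeRing.map_jordan_of_generalized_jordan (hA : IsSemiprimeRing A)
    (hD0 : ∀ a, constantCoeff (D a) = a) (hF1 : constantCoeff (F 1) = 1) (a b : A) :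
    D (a * b + b * a) = D a * D b + D b * D a := by
  have hc := (hA.commute_map_one hF hD0 (D b)).eq
  refine sub_eq_zero.mp (eq_zero_of_mul_add_mul_eq_zero hF1 ?_)
  linear_combination (norm := noncomm_ring)
    jordan_map_one_map_jordan hF a b + D a * hc - hc * D a

theorem IsSemiprimeRing.map_eq_map_one_mul (hA : IsSemiprimeRing A)
    (hD0 : ∀ a, constantCoeff (D a) = a) (a : A) : F a = F 1 * D a :=
  add_self_injective <| by
    simp only [← map_add, map_add_self_of_generalized_jordan hF,
      (hA.commute_map_one hF hD0 (D a)).eq]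

theorem IsSemiprimeRing.map_mul_of_generalized_jordan (hA : IsSemiprimeRing A)
    (hD0 : ∀ a, constantCoeff (D a) = a) (hF0 : ∀ a, constantCoeff (F a) = a) (a b : A) :
    F (a * b) = F a * D b ∧ F (a * b) = D a * F b := by
  have hD := hA.map_mul_of_jordan hD0 (hA.map_jordan_of_generalized_jordan hF hD0 (hF0 1)) a b
  rw [hA.map_eq_map_one_mul hF hD0 (a * b), hA.map_eq_map_one_mul hF hD0 a,
    hA.map_eq_map_one_mul hF hD0 b, hD, ← mul_assoc, ← mul_assoc,
    (hA.commute_map_one hF hD0 (D a)).eq]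
  exact ⟨rfl, rfl⟩

end GeneralizedJordanSeries

section GeneratingSeries

variable {A : Type*} [Ring A]

noncomputable def generatingSeries (d : ℕ → A →+ A) : A →+ A⟦X⟧ where
  toFun a := mk fun k => d k a
  map_zero' := by ext; simp
  map_add' a b := by ext; simp

@[simp]
theorem coeff_generatingSeries (d : ℕ → A →+ A) (n : ℕ) (a : A) :
    coeff n (generatingSeries d a) = d n a := by
  simp [generatingSeries]

theorem coeff_generatingSeries_mul (φ ψ : ℕ → A →+ A) (n : ℕ) (a b : A) :
    coeff n (generatingSeries φ a * generatingSeries ψ b)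
      = ∑ k ∈ Finset.range (n + 1), φ (n - k) a * ψ k b := by
  rw [coeff_mul, ← Finset.Nat.sum_antidiagonal_swap, Finset.Nat.sum_antidiagonal_eq_sum_range_succ_mk]
  simp

theorem coeff_generatingSeries_mul' (φ ψ : ℕ → A →+ A) (n : ℕ) (a b : A) :
    coeff n (generatingSeries φ a * generatingSeries ψ b)
      = ∑ k ∈ Finset.range (n + 1), φ k a * ψ (n - k) b := by
  rw [coeff_mul, Finset.Nat.sum_antidiagonal_eq_sum_range_succ_mk]
  simp

end GeneratingSeries

/-- On a semiprime algebra, every Jordan higher generalized derivation `{fₙ}` (associated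
with `{dₙ}`, with `f₀ = d₀ = I`) is a higher `{fₙ, dₙ}`-derivation. -/
theorem jordan_higher_generalized_derivation_is_higher
    {K A : Type*} [Field K] [CharZero K] [Ring A] [Algebra K A]
    (hsemiprime : ∀ a : A, (∀ x : A, a * x * a = 0) → a = 0)
    (f d : ℕ → Module.End K A)
    (hf0 : f 0 = 1) (hd0 : d 0 = 1)
    (hgen : ∀ (n : ℕ) (a b : A),
      f n (a * b + b * a) =
        ∑ k ∈ Finset.range (n + 1), (f (n - k) a * d k b + d k b * f (n - k) a)) :
    ∀ (n : ℕ) (a b : A),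
      f n (a * b) = ∑ k ∈ Finset.range (n + 1), f (n - k) a * d k b ∧
      f n (a * b) = ∑ k ∈ Finset.range (n + 1), d (n - k) a * f k b := by
  have : IsAddTorsionFree A := .of_isTorsionFree K A
  have hA : IsSemiprimeRing A := hsemiprime
  set F := generatingSeries fun k => (f k).toAddMonoidHom
  set D := generatingSeries fun k => (d k).toAddMonoidHom
  have hF0 : ∀ a, constantCoeff (F a) = a := fun a => by
    simp [F, ← coeff_zero_eq_constantCoeff_apply, hf0]
  have hD0 : ∀ a, constantCoeff (D a) = a := fun a => by
    simp [D, ← coeff_zero_eq_constantCoeff_apply, hd0]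
  have hF : ∀ a b, F (a * b + b * a) = F a * D b + D b * F a := fun a b => ext fun n => by
    simp only [F, D, map_add (coeff n), coeff_generatingSeries, LinearMap.toAddMonoidHom_coe]
    rw [coeff_generatingSeries_mul, coeff_generatingSeries_mul', hgen, Finset.sum_add_distrib]
    rfl
  intro n a b
  obtain ⟨h₁, h₂⟩ := hA.map_mul_of_generalized_jordan hF hD0 hF0 a b
  constructor
  · simpa [F, D, coeff_generatingSeries_mul] using congrArg (coeff n) h₁
  · simpa [F, D, coeff_generatingSeries_mul] using congrArg (coeff n) h₂
end
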